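/- The real matrix-variate gamma function satisfies Γ_p(a) = π^{p(p−1)/4} ∏_{j=0}^{p−1} Γ(a − j/2) for Re(a) > (p−1)/2, and in particular Γ_1(a) = Γ(a) and Γ_2(a) = π^{1/2} Γ(a) Γ(a − 1/2). -/

import Mathlib

/-!
Write a positive definite `2 × 2` matrix as `[[x, z], [z, y]]` and integrate by Tonelli, first in
`y`, then in `z`, then in `x`. For fixed `x > 0` and `z`, the shift `y = z² / x + t` turns the
determinant into `x t`, so the `y`-integral is `Γ(a - 1/2) x^(a - 3/2) e^(-x) e^(-z²/x)`; the
Gaussian integral in `z` contributes `√(π x)`, and what remains in `x` is `√π Γ(a - 1/2)` times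
the Euler integral of `Γ(a)`. Working with lower Lebesgue integrals of the nonnegative integrand
avoids having to prove its integrability on `ℝ³` in advance.
-/

open Real MeasureTheory Set

theorem ENNReal.ofReal_indicator {α : Type*} (s : Set α) (f : α → ℝ) (x : α) :
    ENNReal.ofReal (s.indicator f x) = s.indicator (fun x => ENNReal.ofReal (f x)) x :=
  congr_fun (indicator_comp_of_zero ENNReal.ofReal_zero).symm x

theorem lintegral_prod_prod_swap_inner {α β γ : Type*} [MeasurableSpace α] [MeasurableSpace β]
    [MeasurableSpace γ] {μ : Measure α} {ν : Measure β} {ρ : Measure γ} [SFinite ν] [SFinite ρ]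
    {F : α × β × γ → ENNReal} (hF : Measurable F) :
    ∫⁻ v, F v ∂μ.prod (ν.prod ρ) = ∫⁻ x, ∫⁻ z, ∫⁻ y, F (x, y, z) ∂ν ∂ρ ∂μ := by
  rw [lintegral_prod _ hF.aemeasurable]
  refine lintegral_congr fun x => ?_
  have hFx : Measurable fun p : β × γ => F (x, p) := hF.comp measurable_prodMk_left
  rw [lintegral_prod _ hFx.aemeasurable, lintegral_lintegral_swap hFx.aemeasurable]

theorem lintegral_Ioi_ofReal_rpow_mul_exp_neg {s : ℝ} (hs : 0 < s) :
    ∫⁻ t in Ioi 0, ENNReal.ofReal (t ^ (s - 1) * exp (-t)) = ENNReal.ofReal (Gamma s) := by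
  simp_rw [Gamma_eq_integral hs, mul_comm _ (exp _)]
  exact (ofReal_integral_eq_lintegral_ofReal (GammaIntegral_convergent hs)
    (ae_restrict_of_forall_mem measurableSet_Ioi fun t ht => by
      have := mem_Ioi.mp ht; positivity)).symm

theorem lintegral_ofReal_exp_neg_mul_sq {b : ℝ} (hb : 0 < b) :
    ∫⁻ z : ℝ, ENNReal.ofReal (exp (-b * z ^ 2)) = ENNReal.ofReal √(π / b) := by
  rw [← integral_gaussian, ofReal_integral_eq_lintegral_ofReal (integrable_exp_neg_mul_sq hb)
    (Filter.Eventually.of_forall fun _ => (exp_pos _).le)]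

/-- `(x, y, z)` stands for `[[x, z], [z, y]]`, which is positive definite iff `x > 0` and its
determinant `x y - z²` is positive. -/
def posDefConeTwo : Set (ℝ × ℝ × ℝ) := {v | 0 < v.1 ∧ 0 < v.1 * v.2.1 - v.2.2 ^ 2}

/-- `|X|^r e^(-tr X)` at `X = [[x, z], [z, y]]`. -/
noncomputable def gammaTwoKernel (r : ℝ) (v : ℝ × ℝ × ℝ) : ℝ :=
  (v.1 * v.2.1 - v.2.2 ^ 2) ^ r * exp (-(v.1 + v.2.1))

theorem measurableSet_posDefConeTwo : MeasurableSet posDefConeTwo :=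
  (measurableSet_lt measurable_const measurable_fst).inter
    (measurableSet_lt measurable_const
      (by fun_prop : Measurable fun v : ℝ × ℝ × ℝ => v.1 * v.2.1 - v.2.2 ^ 2))

theorem measurable_gammaTwoKernel (r : ℝ) : Measurable (gammaTwoKernel r) := by
  unfold gammaTwoKernel; fun_prop

theorem indicator_posDefConeTwo_of_nonpos {x : ℝ} (hx : x ≤ 0) (r : ℝ) (p : ℝ × ℝ) :
    posDefConeTwo.indicator (gammaTwoKernel r) (x, p) = 0 :=
  indicator_of_notMem (fun h => hx.not_gt h.1) _

theorem indicator_posDefConeTwo_shift {x : ℝ} (hx : 0 < x) (r t z : ℝ) :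
    posDefConeTwo.indicator (gammaTwoKernel r) (x, t + z ^ 2 / x, z) =
      (Ioi 0).indicator
        (fun t => x ^ r * exp (-x) * exp (-x⁻¹ * z ^ 2) * (t ^ r * exp (-t))) t := by
  have hdet : x * (t + z ^ 2 / x) - z ^ 2 = x * t := by field_simp; ring
  by_cases ht : 0 < t
  · rw [indicator_of_mem (show _ ∈ posDefConeTwo from ⟨hx, by simp only [hdet]; positivity⟩),
      indicator_of_mem (mem_Ioi.mpr ht), gammaTwoKernel]
    simp only [hdet, mul_rpow hx.le ht.le]
    rw [show -(x + (t + z ^ 2 / x)) = -x + -x⁻¹ * z ^ 2 + -t by field_simp; ring, exp_add, exp_add]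
    ring
  · rw [indicator_of_notMem (fun h => ht (by simpa [hdet, hx] using h.2)),
      indicator_of_notMem (by simpa using ht)]

theorem lintegral_lintegral_indicator_posDefConeTwo {s x : ℝ} (hs : 0 < s) (hx : 0 < x) :
    ∫⁻ z, ∫⁻ y, ENNReal.ofReal (posDefConeTwo.indicator (gammaTwoKernel (s - 1)) (x, y, z)) =
      ENNReal.ofReal (√π * Gamma s * (x ^ (s - 1 / 2) * exp (-x))) := by
  have hK : 0 ≤ x ^ (s - 1) * exp (-x) * Gamma s := by have := Gamma_pos_of_pos hs; positivity
  have hy (z : ℝ) :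
      ∫⁻ y, ENNReal.ofReal (posDefConeTwo.indicator (gammaTwoKernel (s - 1)) (x, y, z)) =
        ENNReal.ofReal (x ^ (s - 1) * exp (-x) * Gamma s) *
          ENNReal.ofReal (exp (-x⁻¹ * z ^ 2)) := by
    have hc : 0 ≤ x ^ (s - 1) * exp (-x) * exp (-x⁻¹ * z ^ 2) := by positivity
    rw [← lintegral_add_right_eq_self _ (z ^ 2 / x)]
    simp_rw [indicator_posDefConeTwo_shift hx, ENNReal.ofReal_indicator]
    rw [lintegral_indicator measurableSet_Ioi]
    simp_rw [ENNReal.ofReal_mul hc]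
    rw [lintegral_const_mul _ (by fun_prop), lintegral_Ioi_ofReal_rpow_mul_exp_neg hs,
      ← ENNReal.ofReal_mul hc, ← ENNReal.ofReal_mul hK]
    ring_nf
  have hsqrt : x ^ (s - 1) * √(π / x⁻¹) = √π * x ^ (s - 1 / 2) := by
    rw [div_inv_eq_mul, sqrt_mul pi_nonneg, sqrt_eq_rpow x, mul_left_comm, ← rpow_add hx]
    ring_nf
  simp_rw [hy]
  rw [lintegral_const_mul _ (by fun_prop), lintegral_ofReal_exp_neg_mul_sq (inv_pos.mpr hx),
    ← ENNReal.ofReal_mul hK]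
  congr 1
  linear_combination exp (-x) * Gamma s * hsqrt

theorem integral_posDefConeTwo_gammaTwoKernel {a : ℝ} (ha : 1 < a) :
    ∫ v in posDefConeTwo, gammaTwoKernel (a - 3 / 2) v = √π * Gamma a * Gamma (a - 1 / 2) := by
  have hs : 0 < a - 1 / 2 := by linarith
  have hc : 0 ≤ √π * Gamma (a - 1 / 2) := by have := Gamma_pos_of_pos hs; positivity
  have hsection (x : ℝ) :
      ∫⁻ z, ∫⁻ y, ENNReal.ofReal
          (posDefConeTwo.indicator (gammaTwoKernel (a - 3 / 2)) (x, y, z)) =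
        (Ioi 0).indicator
          (fun x => ENNReal.ofReal (√π * Gamma (a - 1 / 2) * (x ^ (a - 1) * exp (-x)))) x := by
    rcases le_or_gt x 0 with hx | hx
    · simp [indicator_posDefConeTwo_of_nonpos hx, hx]
    · rw [indicator_of_mem (mem_Ioi.mpr hx), show a - 3 / 2 = a - 1 / 2 - 1 by ring,
        lintegral_lintegral_indicator_posDefConeTwo hs hx]
      ring_nf
  have hnonneg : 0 ≤ posDefConeTwo.indicator (gammaTwoKernel (a - 3 / 2)) :=
    indicator_nonneg fun v hv => by have := hv.2; unfold gammaTwoKernel; positivity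
  have hmeas := (measurable_gammaTwoKernel (a - 3 / 2)).indicator measurableSet_posDefConeTwo
  rw [← integral_indicator measurableSet_posDefConeTwo,
    integral_eq_lintegral_of_nonneg_ae (.of_forall hnonneg) hmeas.aestronglyMeasurable,
    Measure.volume_eq_prod, Measure.volume_eq_prod,
    lintegral_prod_prod_swap_inner hmeas.ennreal_ofReal]
  simp_rw [hsection, ENNReal.ofReal_mul hc]
  rw [lintegral_indicator measurableSet_Ioi, lintegral_const_mul _ (by fun_prop),
    lintegral_Ioi_ofReal_rpow_mul_exp_neg (by linarith), ← ENNReal.ofReal_mul hc,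
    ENNReal.toReal_ofReal (by have := Gamma_pos_of_pos (show 0 < a by linarith); positivity)]
  ring

/-- The real matrix-variate gamma function
`Γ_p(a) = ∫_{X>0} |X|^{a−(p+1)/2} e^{−tr X} dX = π^{p(p−1)/4} ∏_{j=0}^{p−1} Γ(a − j/2)`:
the cases `p = 1` (`Γ_1(a) = Γ(a)`) and `p = 2`
(`Γ_2(a) = π^{1/2} Γ(a) Γ(a − 1/2)`), the latter with the cone of `2×2` symmetric
positive definite matrices parametrized by `(x, y, z) ↦ ![![x, z], ![z, y]]`. -/
theorem stmt_14 (a : ℝ) :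
    ((1 : ℝ)/2 - 1 < a - 1 → -- i.e. Re(a) > (p-1)/2 for p = 1
      ∫ x in Set.Ioi (0:ℝ), x ^ (a - (1 + 1 : ℝ)/2) * Real.exp (-x) = Real.Gamma a) ∧
    ((2 : ℝ)/2 - 1 < a - 1 → -- i.e. Re(a) > (p-1)/2 for p = 2
      ∫ v in {v : ℝ × ℝ × ℝ | 0 < v.1 ∧ 0 < v.1 * v.2.1 - v.2.2 ^ 2},
          (v.1 * v.2.1 - v.2.2 ^ 2) ^ (a - (2 + 1 : ℝ)/2) * Real.exp (-(v.1 + v.2.1)) =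
        π ^ ((2 * (2 - 1) : ℝ)/4) * Real.Gamma a * Real.Gamma (a - 1/2)) := by
  constructor
  · intro ha
    rw [show a - (1 + 1 : ℝ) / 2 = a - 1 by norm_num, Gamma_eq_integral (by linarith)]
    simp_rw [mul_comm (exp _)]
  · intro ha
    rw [show a - (2 + 1 : ℝ) / 2 = a - 3 / 2 by norm_num,
      show (2 * (2 - 1) : ℝ) / 4 = 1 / 2 by norm_num, ← sqrt_eq_rpow]
    exact integral_posDefConeTwo_gammaTwoKernel (by linarith)
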